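/- Let R ≅ R_1 × R_2 × ⋯ × R_n (n ≥ 3) be a finite commutative ring with unity, where R_1 and R_2 are local rings neither of which has characteristic 2. Then the four vertices (0,0,…,0), (1,0,…,0), (−1,1,0,…,0), (1,−1,0,…,0) induce a subgraph of G_Id(R) isomorphic to P_4; in particular G_Id(R) is not a cograph. -/

import Mathlib

/-- The idempotent graph of a ring: vertices are ring elements, distinct `x, y`
adjacent iff `x + y` is idempotent. -/
def idemGraph (R : Type*) [Ring R] : SimpleGraph R where
  Adj x y := x ≠ y ∧ IsIdempotentElem (x + y)
  symm := ⟨fun x y h => ⟨h.1.symm, by rw [add_comm]; exact h.2⟩⟩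
  loopless := ⟨fun x h => h.1 rfl⟩

/-- The set of idempotent elements of a ring. -/
def idemSet (R : Type*) [Ring R] : Set R := {e : R | IsIdempotentElem e}

/-- A split graph: vertices partition into a clique and an independent set. -/
def IsSplitGraph {V : Type*} (G : SimpleGraph V) : Prop :=
  ∃ C I : Set V, Disjoint C I ∧ C ∪ I = Set.univ ∧ G.IsClique C ∧
    I.Pairwise (fun a b => ¬ G.Adj a b)

/-- A cograph: no induced path on four vertices. -/
def IsCograph {V : Type*} (G : SimpleGraph V) : Prop :=
  ¬ ∃ a b c d : V, a ≠ c ∧ a ≠ d ∧ b ≠ d ∧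
    G.Adj a b ∧ G.Adj b c ∧ G.Adj c d ∧ ¬ G.Adj a c ∧ ¬ G.Adj a d ∧ ¬ G.Adj b d

/-!
Idempotence in a product is checked coordinatewise, and `-1` is not idempotent once `2 ≠ 0`.
With `e_i` the unit vectors, the sums along the path are `a + b = e_0`, `b + c = e_1` and
`c + d = 0`, all idempotent, while each of `a + c`, `a + d`, `b + d` has a coordinate equal
to `-1`.
-/

theorem neg_one_ne_one_of_two_ne_zero {S : Type*} [Ring S] (h : (2 : S) ≠ 0) : (-1 : S) ≠ 1 :=
  fun h' => h (one_add_one_eq_two (R := S) ▸ neg_eq_iff_add_eq_zero.mp h')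

theorem not_isIdempotentElem_neg_one {S : Type*} [Ring S] (h : (2 : S) ≠ 0) :
    ¬ IsIdempotentElem (-1 : S) := by
  rw [IsIdempotentElem.iff_eq_one_of_isUnit isUnit_one.neg]
  exact neg_one_ne_one_of_two_ne_zero h

namespace Pi

variable {ι : Type*} {R : ι → Type*}

theorem isIdempotentElem_iff [∀ i, Mul (R i)] {x : ∀ i, R i} :
    IsIdempotentElem x ↔ ∀ i, IsIdempotentElem (x i) :=
  funext_iff

theorem isIdempotentElem_single [DecidableEq ι] [∀ i, MulZeroClass (R i)] (i : ι) {e : R i}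
    (he : IsIdempotentElem e) : IsIdempotentElem (Pi.single i e) := by
  rw [IsIdempotentElem, ← Pi.single_mul, he.eq]

end Pi

def IsInducedP4 {V : Type*} (G : SimpleGraph V) (a b c d : V) : Prop :=
  a ≠ c ∧ a ≠ d ∧ b ≠ d ∧
    G.Adj a b ∧ G.Adj b c ∧ G.Adj c d ∧ ¬ G.Adj a c ∧ ¬ G.Adj a d ∧ ¬ G.Adj b d

theorem IsInducedP4.not_isCograph {V : Type*} {G : SimpleGraph V} {a b c d : V}
    (h : IsInducedP4 G a b c d) : ¬ IsCograph G :=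
  fun hG => hG ⟨a, b, c, d, h⟩

theorem idemGraph_pi_isInducedP4 {ι : Type*} [DecidableEq ι] (R : ι → Type*) [∀ k, Ring (R k)]
    {i j : ι} (hij : i ≠ j) (hi : (2 : R i) ≠ 0) (hj : (2 : R j) ≠ 0) :
    IsInducedP4 (idemGraph (∀ k, R k)) 0 (Pi.single i 1)
      (Pi.single i (-1) + Pi.single j 1) (Pi.single i 1 + Pi.single j (-1)) := by
  have : Nontrivial (R i) := nontrivial_of_ne _ _ hi
  have : Nontrivial (R j) := nontrivial_of_ne _ _ hj
  have hi1 := neg_one_ne_one_of_two_ne_zero hi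
  have not_idem : ∀ (x : ∀ k, R k) (k : ι), x k = -1 → (2 : R k) ≠ 0 → ¬ IsIdempotentElem x :=
    fun x k hx h2 hx' => not_isIdempotentElem_neg_one h2 (hx ▸ Pi.isIdempotentElem_iff.mp hx' k)
  refine ⟨?_, ?_, ?_, ⟨?_, ?_⟩, ⟨?_, ?_⟩, ⟨?_, ?_⟩, ?_, ?_, ?_⟩
  · exact ne_of_apply_ne (· i) (by simp [hij])
  · exact ne_of_apply_ne (· i) (by simp [hij])
  · exact ne_of_apply_ne (· j) (by simp [hij.symm])
  · exact ne_of_apply_ne (· i) (by simp)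
  · simpa using Pi.isIdempotentElem_single i IsIdempotentElem.one
  · exact ne_of_apply_ne (· j) (by simp [hij.symm])
  · rw [← add_assoc, ← Pi.single_add, add_neg_cancel, Pi.single_zero, zero_add]
    exact Pi.isIdempotentElem_single j IsIdempotentElem.one
  · exact ne_of_apply_ne (· i) (by simpa [hij] using hi1)
  · have hcd :
        Pi.single i (-1 : R i) + Pi.single j 1 + (Pi.single i 1 + Pi.single j (-1)) = 0 := by
      simp only [Pi.single_neg]; abel
    exact hcd ▸ IsIdempotentElem.zero
  · exact fun h => not_idem _ i (by simp [hij]) hi h.2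
  · exact fun h => not_idem _ j (by simp [hij.symm]) hj h.2
  · exact fun h => not_idem _ j (by simp [hij.symm]) hj h.2

theorem stmt9 {n : ℕ} (hn : 3 ≤ n) (R : Fin n → Type*) [∀ i, CommRing (R i)]
    (h1 : (2 : R ⟨0, by omega⟩) ≠ 0) (h2 : (2 : R ⟨1, by omega⟩) ≠ 0) :
    (let G := idemGraph (∀ i, R i)
     let i0 : Fin n := ⟨0, by omega⟩
     let i1 : Fin n := ⟨1, by omega⟩
     let a : ∀ i, R i := 0
     let b := Pi.single i0 (1 : R i0)
     let c := Pi.single i0 (-1 : R i0) + Pi.single i1 (1 : R i1)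
     let d := Pi.single i0 (1 : R i0) + Pi.single i1 (-1 : R i1)
     a ≠ c ∧ a ≠ d ∧ b ≠ d ∧
     G.Adj a b ∧ G.Adj b c ∧ G.Adj c d ∧ ¬ G.Adj a c ∧ ¬ G.Adj a d ∧ ¬ G.Adj b d) ∧
    ¬ IsCograph (idemGraph (∀ i, R i)) := by
  have hP4 := idemGraph_pi_isInducedP4 R (i := ⟨0, by omega⟩) (j := ⟨1, by omega⟩)
    (by simp [Fin.ext_iff]) h1 h2
  exact ⟨hP4, hP4.not_isCograph⟩
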